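/- arXiv:2601.17509 — 2 statements merged into one kernel-verified Lean document; each statement's English description precedes it below -/
import Mathlib

section
/- Let a ≠ 0, r, θ, Λ, M ∈ ℝ with Λ > −3/a², r·M ≥ 0, and Σ = r² + a² cos²θ > 0. Then F := (a²+r²)² (1 + Λa²cos²θ/3) − a² sin²θ · (−(Λ/3) r²(r²+a²) + r² − 2Mr + a²) > 0. -/
/-!
Writing `Σ = r² + a² cos² θ` and `Ξ = 1 + Λ a² / 3`, the identity `sin² θ + cos² θ = 1` gives
`F = (a² + r²) Σ Ξ + 2 a² r M sin² θ`. The first summand is positive, since `Σ > 0`,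
`a² + r² ≥ Σ` and `Λ > -3 / a²` means `Ξ > 0`; the second is nonnegative because `r M ≥ 0`.
-/

lemma one_add_mul_sq_div_three_pos {a Λ : ℝ} (hΛ : Λ > -3 / a ^ 2) : 0 < 1 + Λ * a ^ 2 / 3 := by
  rcases eq_or_ne a 0 with rfl | ha
  · norm_num
  · have h : -3 < Λ * a ^ 2 := (div_lt_iff₀ (by positivity)).mp hΛ
    linarith

lemma kerr_de_sitter_F_eq {a r Λ M s c : ℝ} (hsc : s ^ 2 + c ^ 2 = 1) :
    (a ^ 2 + r ^ 2) ^ 2 * (1 + Λ * a ^ 2 * c ^ 2 / 3)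
      - a ^ 2 * s ^ 2 * (-(Λ / 3) * r ^ 2 * (r ^ 2 + a ^ 2) + r ^ 2 - 2 * M * r + a ^ 2)
      = (a ^ 2 + r ^ 2) * (r ^ 2 + a ^ 2 * c ^ 2) * (1 + Λ * a ^ 2 / 3)
        + 2 * a ^ 2 * (r * M) * s ^ 2 := by
  rw [show s ^ 2 = 1 - c ^ 2 by linarith]
  ring

theorem F_pos_general (a r θ Λ M : ℝ) (hΛ : Λ > -3 / a ^ 2)
    (hrM : r * M ≥ 0) (hSigma : r ^ 2 + a ^ 2 * Real.cos θ ^ 2 > 0) :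
    (a ^ 2 + r ^ 2) ^ 2 * (1 + Λ * a ^ 2 * Real.cos θ ^ 2 / 3)
      - a ^ 2 * Real.sin θ ^ 2
          * (-(Λ / 3) * r ^ 2 * (r ^ 2 + a ^ 2) + r ^ 2 - 2 * M * r + a ^ 2)
      > 0 := by
  rw [kerr_de_sitter_F_eq (Real.sin_sq_add_cos_sq θ)]
  have hΞ := one_add_mul_sq_div_three_pos hΛ
  have hA : 0 < a ^ 2 + r ^ 2 := by
    nlinarith [Real.cos_sq_le_one θ, sq_nonneg a]
  have hmass : 0 ≤ 2 * a ^ 2 * (r * M) * Real.sin θ ^ 2 := by positivity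
  have hmain := mul_pos (mul_pos hA hSigma) hΞ
  linarith

theorem F_pos (a r θ Λ M : ℝ) (ha : a ≠ 0) (hΛ : Λ > -3 / a ^ 2)
    (hrM : r * M ≥ 0) (hSigma : r ^ 2 + a ^ 2 * Real.cos θ ^ 2 > 0) :
    (a ^ 2 + r ^ 2) ^ 2 * (1 + Λ * a ^ 2 * Real.cos θ ^ 2 / 3)
      - a ^ 2 * Real.sin θ ^ 2
          * (-(Λ / 3) * r ^ 2 * (r ^ 2 + a ^ 2) + r ^ 2 - 2 * M * r + a ^ 2)
      > 0 :=
  F_pos_general a r θ Λ M hΛ hrM hSigma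
end

section
/- Fix a ≠ 0 and Λ₀ > −3/a², set Ξ = 1 + Λ₀a²/3, and let M : ℝ → ℝ be continuous with M(r)/r → 0 as r → 0. Define, for r ≠ 0 or cosθ ≠ 0: N(r,θ) = −Ξ² [ (a²+r²)(r²+a²cos²θ)Ξ + 2a²rM(r)sin²θ ] / [ (1 + Λ₀a²cos²θ/3) · (−(Λ₀/3)r²(r²+a²) + r² − 2M(r)r + a²) · (r²+a²cos²θ) ]. Then N(r,θ) → −Ξ³ as (r,θ) → (0, π/2) along any path with r > 0. -/
/-!
Both numerator and denominator carry the factor `ρ = r² + a² cos² θ`, which vanishes at the ring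
`r = 0, θ = π/2`. Cancelling it, the only delicate term left is `2 a² r M(r) sin² θ / ρ`, which is
`(r²/ρ) · (M(r)/r)` times a bounded factor; as `0 ≤ r²/ρ ≤ 1` and `M(r)/r → 0` it tends to `0`.
Everything else is continuous at the ring, where the denominator equals `a² ≠ 0`.
-/

open Filter Topology

/-- `g^{tt}` after cancelling `ρ = r² + a² cos² θ`, with `φ` standing for `M(r)/r` and `q` for
`(r²/ρ) · (M(r)/r)`. -/
noncomputable def gttReduced (a Λ₀ r θ φ q : ℝ) : ℝ :=
  -(1 + Λ₀ * a ^ 2 / 3) ^ 2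
      * ((a ^ 2 + r ^ 2) * (1 + Λ₀ * a ^ 2 / 3) + 2 * a ^ 2 * q * Real.sin θ ^ 2)
    / ((1 + Λ₀ * a ^ 2 * Real.cos θ ^ 2 / 3)
      * (-(Λ₀ / 3) * r ^ 2 * (r ^ 2 + a ^ 2) + r ^ 2 - 2 * φ * r ^ 2 + a ^ 2))

lemma gtt_eq_gttReduced (a Λ₀ m r θ : ℝ) (hr : r ≠ 0) :
    -(1 + Λ₀ * a ^ 2 / 3) ^ 2 *
        ((a ^ 2 + r ^ 2) * (r ^ 2 + a ^ 2 * Real.cos θ ^ 2) * (1 + Λ₀ * a ^ 2 / 3)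
          + 2 * a ^ 2 * r * m * Real.sin θ ^ 2)
      / ((1 + Λ₀ * a ^ 2 * Real.cos θ ^ 2 / 3)
          * (-(Λ₀ / 3) * r ^ 2 * (r ^ 2 + a ^ 2) + r ^ 2 - 2 * m * r + a ^ 2)
          * (r ^ 2 + a ^ 2 * Real.cos θ ^ 2))
      = gttReduced a Λ₀ r θ (m / r) (r ^ 2 / (r ^ 2 + a ^ 2 * Real.cos θ ^ 2) * (m / r)) := by
  have hρ : r ^ 2 + a ^ 2 * Real.cos θ ^ 2 ≠ 0 := by positivity
  unfold gttReduced
  conv_rhs => rw [← mul_div_mul_right _ _ hρ]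
  congr 1 <;> field_simp

lemma tendsto_gttReduced {ι : Type*} {l : Filter ι} {a : ℝ} (ha : a ≠ 0) (Λ₀ : ℝ)
    {r θ φ q : ι → ℝ} (hr : Tendsto r l (𝓝 0)) (hθ : Tendsto θ l (𝓝 (Real.pi / 2)))
    (hφ : Tendsto φ l (𝓝 0)) (hq : Tendsto q l (𝓝 0)) :
    Tendsto (fun i => gttReduced a Λ₀ (r i) (θ i) (φ i) (q i)) l
      (𝓝 (-(1 + Λ₀ * a ^ 2 / 3) ^ 3)) := by
  have hcos := (Real.continuous_cos.tendsto _).comp hθ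
  have hsin := (Real.continuous_sin.tendsto _).comp hθ
  rw [Real.cos_pi_div_two] at hcos
  rw [Real.sin_pi_div_two] at hsin
  have hnum := ((((hr.pow 2).const_add (a ^ 2)).mul_const (1 + Λ₀ * a ^ 2 / 3)).add
    ((hq.const_mul (2 * a ^ 2)).mul (hsin.pow 2))).const_mul (-(1 + Λ₀ * a ^ 2 / 3) ^ 2)
  have hden := (((hcos.pow 2).const_mul (Λ₀ * a ^ 2)).div_const 3).const_add 1 |>.mul
    (((((hr.pow 2).const_mul (-(Λ₀ / 3))).mul ((hr.pow 2).add_const (a ^ 2))).add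
      (hr.pow 2)).sub ((hφ.const_mul 2).mul (hr.pow 2)) |>.add_const (a ^ 2))
  convert hnum.div hden (by simpa using pow_ne_zero 2 ha) using 2
  · rfl
  · field_simp
    ring

theorem gtt_ring_limit_general (a Λ₀ : ℝ) (ha : a ≠ 0)
    (M : ℝ → ℝ)
    (hM : Tendsto (fun r : ℝ => M r / r) (𝓝[≠] 0) (𝓝 0)) :
    Tendsto
      (fun p : ℝ × ℝ =>
        -(1 + Λ₀ * a ^ 2 / 3) ^ 2 *
            ((a ^ 2 + p.1 ^ 2) * (p.1 ^ 2 + a ^ 2 * Real.cos p.2 ^ 2)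
                * (1 + Λ₀ * a ^ 2 / 3)
              + 2 * a ^ 2 * p.1 * M p.1 * Real.sin p.2 ^ 2)
          / ((1 + Λ₀ * a ^ 2 * Real.cos p.2 ^ 2 / 3)
              * (-(Λ₀ / 3) * p.1 ^ 2 * (p.1 ^ 2 + a ^ 2) + p.1 ^ 2
                  - 2 * M p.1 * p.1 + a ^ 2)
              * (p.1 ^ 2 + a ^ 2 * Real.cos p.2 ^ 2)))
      (𝓝[{p : ℝ × ℝ | 0 < p.1}] (0, Real.pi / 2))
      (𝓝 (-(1 + Λ₀ * a ^ 2 / 3) ^ 3)) := by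
  set l := 𝓝[{p : ℝ × ℝ | 0 < p.1}] ((0 : ℝ), Real.pi / 2)
  have hr : Tendsto Prod.fst l (𝓝[>] 0) :=
    continuous_fst.continuousWithinAt.tendsto_nhdsWithin fun _ hp => hp
  have hθ : Tendsto Prod.snd l (𝓝 (Real.pi / 2)) :=
    (continuous_snd.tendsto _).mono_left nhdsWithin_le_nhds
  have hφ : Tendsto (fun p : ℝ × ℝ => M p.1 / p.1) l (𝓝 0) :=
    hM.comp (hr.mono_right (nhdsGT_le_nhdsNE 0))
  have hq := bdd_le_mul_tendsto_zero
    (f := fun p : ℝ × ℝ => p.1 ^ 2 / (p.1 ^ 2 + a ^ 2 * Real.cos p.2 ^ 2))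
    (.of_forall fun _ => by positivity)
    (.of_forall fun _ => div_le_one_of_le₀ (le_add_of_nonneg_right (by positivity)) (by positivity))
    hφ
  refine (tendsto_gttReduced ha Λ₀ (hr.mono_right nhdsWithin_le_nhds) hθ hφ hq).congr' ?_
  filter_upwards [self_mem_nhdsWithin] with p hp
  exact (gtt_eq_gttReduced a Λ₀ (M p.1) p.1 p.2 (ne_of_gt hp)).symm

theorem gtt_ring_limit (a Λ₀ : ℝ) (ha : a ≠ 0) (hΛ₀ : Λ₀ > -3 / a ^ 2)
    (M : ℝ → ℝ) (hMcont : Continuous M)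
    (hM : Tendsto (fun r : ℝ => M r / r) (𝓝[≠] 0) (𝓝 0)) :
    Tendsto
      (fun p : ℝ × ℝ =>
        -(1 + Λ₀ * a ^ 2 / 3) ^ 2 *
            ((a ^ 2 + p.1 ^ 2) * (p.1 ^ 2 + a ^ 2 * Real.cos p.2 ^ 2)
                * (1 + Λ₀ * a ^ 2 / 3)
              + 2 * a ^ 2 * p.1 * M p.1 * Real.sin p.2 ^ 2)
          / ((1 + Λ₀ * a ^ 2 * Real.cos p.2 ^ 2 / 3)
              * (-(Λ₀ / 3) * p.1 ^ 2 * (p.1 ^ 2 + a ^ 2) + p.1 ^ 2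
                  - 2 * M p.1 * p.1 + a ^ 2)
              * (p.1 ^ 2 + a ^ 2 * Real.cos p.2 ^ 2)))
      (𝓝[{p : ℝ × ℝ | 0 < p.1}] (0, Real.pi / 2))
      (𝓝 (-(1 + Λ₀ * a ^ 2 / 3) ^ 3)) :=
  gtt_ring_limit_general a Λ₀ ha M hM
end
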